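/- arXiv:2511.10569 — 8 statements merged into one kernel-verified Lean document; each statement's English description precedes it below -/
import Mathlib

section
/- Let M be a right R-module with endomorphism ring S = End_R(M). Suppose M is image-projective and generates its kernels. If f ∈ S and e ∈ S is an idempotent such that the right annihilator of f in S equals eS, then ker f = eM. -/
/-- `M` is image-projective: inclusion of images of endomorphisms implies
membership in the corresponding principal right ideal of `End R M`. -/
def ImageProjective (R M : Type*) [Ring R] [AddCommGroup M] [Module R M] : Prop :=
  ∀ f g : Module.End R M, LinearMap.range f ≤ LinearMap.range g → ∃ s : Module.End R M, f = g * s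

/-- `M` generates its kernels: for every endomorphism `f`, `ker f` is the sum of the
images of endomorphisms whose image is contained in `ker f`. -/
def GeneratesKernels (R M : Type*) [Ring R] [AddCommGroup M] [Module R M] : Prop :=
  ∀ f : Module.End R M,
    LinearMap.ker f =
      ⨆ γ ∈ {γ : Module.End R M | LinearMap.range γ ≤ LinearMap.ker f}, LinearMap.range γ
/-- Right annihilator of an element as a set. -/
def rAnn (S : Type*) [Ring S] (a : S) : Set S := {x : S | a * x = 0}

/-- Left annihilator of an element as a set. -/
def lAnn (S : Type*) [Ring S] (a : S) : Set S := {x : S | x * a = 0}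

/-- Principal right ideal `bS`. -/
def rIdeal (S : Type*) [Ring S] (b : S) : Set S := {x : S | ∃ s : S, x = b * s}

/-- Principal left ideal `Sb`. -/
def lIdeal (S : Type*) [Ring S] (b : S) : Set S := {x : S | ∃ s : S, x = s * b}

section

variable {R M : Type*} [Ring R] [AddCommGroup M] [Module R M]

theorem mem_rAnn_iff_range_le_ker {f γ : Module.End R M} :
    γ ∈ rAnn (Module.End R M) f ↔ LinearMap.range γ ≤ LinearMap.ker f :=
  LinearMap.range_le_ker_iff.symm

theorem range_le_ker_of_rIdeal_subset_rAnn {f e : Module.End R M}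
    (h : rIdeal (Module.End R M) e ⊆ rAnn (Module.End R M) f) :
    LinearMap.range e ≤ LinearMap.ker f :=
  mem_rAnn_iff_range_le_ker.1 (h ⟨1, (mul_one e).symm⟩)

theorem GeneratesKernels.ker_le_range_of_rAnn_subset_rIdeal (hgen : GeneratesKernels R M)
    {f e : Module.End R M} (h : rAnn (Module.End R M) f ⊆ rIdeal (Module.End R M) e) :
    LinearMap.ker f ≤ LinearMap.range e := by
  rw [hgen f]
  refine iSup₂_le fun γ hγ => ?_
  obtain ⟨s, rfl⟩ := h (mem_rAnn_iff_range_le_ker.2 hγ)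
  exact LinearMap.range_comp_le_range s e

end

theorem ker_eq_range_of_rann_eq_idem_general (R M : Type*) [Ring R] [AddCommGroup M] [Module R M]
    (hgen : GeneratesKernels R M)
    (f e : Module.End R M)
    (hann : rAnn (Module.End R M) f = rIdeal (Module.End R M) e) :
    LinearMap.ker f = LinearMap.range e :=
  le_antisymm (hgen.ker_le_range_of_rAnn_subset_rIdeal hann.subset)
    (range_le_ker_of_rIdeal_subset_rAnn hann.symm.subset)

/-- If `M` is image-projective and generates its kernels, `f ∈ End R M`, and `e` is an
idempotent endomorphism with `rann_S(f) = eS`, then `ker f = eM`. -/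
theorem ker_eq_range_of_rann_eq_idem (R M : Type*) [Ring R] [AddCommGroup M] [Module R M]
    (himp : ImageProjective R M) (hgen : GeneratesKernels R M)
    (f e : Module.End R M) (he : e * e = e)
    (hann : rAnn (Module.End R M) f = rIdeal (Module.End R M) e) :
    LinearMap.ker f = LinearMap.range e :=
  ker_eq_range_of_rann_eq_idem_general R M hgen f e hann
end

section
/- Let R be a ring which is right centrally quasi-morphic. If the center Z(R) is von Neumann regular, then R is left centrally quasi-morphic. -/
/-- A ring is right centrally quasi-morphic. -/
def RightCentrallyQuasiMorphic (S : Type*) [Ring S] : Prop :=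
  ∀ a : S, ∃ b c : S, b ∈ Set.center S ∧ c ∈ Set.center S ∧
    rAnn S a = rIdeal S b ∧ rIdeal S a = rAnn S c

/-- A ring is left centrally quasi-morphic. -/
def LeftCentrallyQuasiMorphic (S : Type*) [Ring S] : Prop :=
  ∀ a : S, ∃ b c : S, b ∈ Set.center S ∧ c ∈ Set.center S ∧
    lAnn S a = lIdeal S b ∧ lIdeal S a = lAnn S c

/-- The center of a ring is von Neumann regular. -/
def CenterVNRegular (S : Type*) [Ring S] : Prop :=
  ∀ a ∈ Set.center S, ∃ b ∈ Set.center S, a = a * b * a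


/-!
Von Neumann regularity of the centre turns the central generators into central idempotents:
if `b = b g b` then `bR = (bg)R`, and if `c = c e c` then `rAnn c = rAnn (ce)`. Once
`rAnn a = hR` and `aR = rAnn f` with `h`, `f` idempotent, writing `1 - f = a s` shows that `a` is
regular (`a = a s a`), that `x a = 0` forces `x = x f`, and that `1 - h = (1 - h) s a`; hence
`lAnn a = Rf` and `Ra = R(1 - h) = lAnn h`.
-/

section CentrallyQuasiMorphic

variable {R : Type*} [Ring R]

theorem mem_rIdeal_self (a : R) : a ∈ rIdeal R a := ⟨1, (mul_one a).symm⟩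

theorem isIdempotentElem_mul_of_eq_mul_mul {b g : R} (h : b = b * g * b) :
    IsIdempotentElem (b * g) := by
  rw [IsIdempotentElem, ← mul_assoc, ← h]

theorem rIdeal_eq_rIdeal_mul_of_eq_mul_mul {b g : R} (h : b = b * g * b) :
    rIdeal R b = rIdeal R (b * g) := by
  ext x
  constructor
  · rintro ⟨s, rfl⟩
    exact ⟨b * s, by rw [← mul_assoc, ← h]⟩
  · rintro ⟨s, rfl⟩
    exact ⟨g * s, by rw [mul_assoc]⟩

theorem rAnn_eq_rAnn_mul_of_eq_mul_mul {c e : R} (hc : c ∈ Set.center R) (h : c = c * e * c) :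
    rAnn R c = rAnn R (c * e) := by
  have hec : e * c = c * e := ((Set.mem_center_iff.mp hc).comm e).symm
  ext x
  constructor
  · intro (hx : c * x = 0)
    change c * e * x = 0
    rw [← hec, mul_assoc, hx, mul_zero]
  · intro (hx : c * e * x = 0)
    calc c * x = c * (e * c) * x := by rw [← mul_assoc, ← h]
      _ = c * (c * e * x) := by rw [hec, mul_assoc c]
      _ = 0 := by rw [hx, mul_zero]

section RIdealEqRAnn

variable {a f : R}

theorem mul_eq_zero_of_rIdeal_eq_rAnn (h : rIdeal R a = rAnn R f) : f * a = 0 :=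
  (h ▸ mem_rIdeal_self a : a ∈ rAnn R f)

theorem one_sub_mem_rIdeal_of_rIdeal_eq_rAnn (hf : IsIdempotentElem f)
    (h : rIdeal R a = rAnn R f) : 1 - f ∈ rIdeal R a := by
  rw [h]
  change f * (1 - f) = 0
  rw [mul_sub, mul_one, hf.eq, sub_self]

theorem exists_eq_mul_mul_of_rIdeal_eq_rAnn (hf : IsIdempotentElem f)
    (h : rIdeal R a = rAnn R f) : ∃ s, a = a * s * a := by
  obtain ⟨s, hs⟩ := one_sub_mem_rIdeal_of_rIdeal_eq_rAnn hf h
  exact ⟨s, by rw [← hs, sub_mul, one_mul, mul_eq_zero_of_rIdeal_eq_rAnn h, sub_zero]⟩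

theorem lAnn_eq_lIdeal_of_rIdeal_eq_rAnn (hf : IsIdempotentElem f)
    (h : rIdeal R a = rAnn R f) : lAnn R a = lIdeal R f := by
  obtain ⟨s, hs⟩ := one_sub_mem_rIdeal_of_rIdeal_eq_rAnn hf h
  ext x
  constructor
  · intro (hx : x * a = 0)
    have hxf : x * (1 - f) = 0 := by rw [hs, ← mul_assoc, hx, zero_mul]
    rw [mul_sub, mul_one, sub_eq_zero] at hxf
    exact ⟨x, hxf⟩
  · rintro ⟨r, rfl⟩
    change r * f * a = 0
    rw [mul_assoc, mul_eq_zero_of_rIdeal_eq_rAnn h, mul_zero]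

end RIdealEqRAnn

theorem lIdeal_eq_lAnn_of_rAnn_eq_rIdeal {a s e : R} (hs : a = a * s * a)
    (he : IsIdempotentElem e) (h : rAnn R a = rIdeal R e) : lIdeal R a = lAnn R e := by
  have hae : a * e = 0 := (h ▸ mem_rIdeal_self e : e ∈ rAnn R a)
  have hsa : (1 - e) * s * a = 1 - e := by
    have hmem : 1 - e - (1 - e) * s * a ∈ rAnn R a := by
      change a * (1 - e - (1 - e) * s * a) = 0
      rw [mul_sub, mul_sub, mul_one, hae, sub_zero, ← mul_assoc, ← mul_assoc, mul_sub, mul_one,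
        hae, sub_zero, ← hs, sub_self]
    obtain ⟨r, hr⟩ := h ▸ hmem
    have hkill : (1 - e) * (1 - e - (1 - e) * s * a) = 0 := by
      rw [hr, ← mul_assoc, sub_mul, one_mul, he.eq, sub_self, zero_mul]
    rw [mul_sub, ← mul_assoc, ← mul_assoc, he.one_sub.eq, sub_eq_zero] at hkill
    exact hkill.symm
  ext x
  constructor
  · rintro ⟨r, rfl⟩
    change r * a * e = 0
    rw [mul_assoc, hae, mul_zero]
  · intro (hx : x * e = 0)
    refine ⟨x * ((1 - e) * s), ?_⟩
    rw [mul_assoc, hsa, mul_sub, mul_one, hx, sub_zero]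

end CentrallyQuasiMorphic

/-- A right centrally quasi-morphic ring with von Neumann regular center is
left centrally quasi-morphic. -/
theorem leftCQM_of_rightCQM_of_centerVNR (R : Type*) [Ring R]
    (hR : RightCentrallyQuasiMorphic R) (hZ : CenterVNRegular R) :
    LeftCentrallyQuasiMorphic R := by
  intro a
  obtain ⟨b, c, hb, hc, hrann, hrid⟩ := hR a
  obtain ⟨g, hg, hbg⟩ := hZ b hb
  obtain ⟨e, he, hce⟩ := hZ c hc
  rw [rIdeal_eq_rIdeal_mul_of_eq_mul_mul hbg] at hrann
  rw [rAnn_eq_rAnn_mul_of_eq_mul_mul hc hce] at hrid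
  have hf := isIdempotentElem_mul_of_eq_mul_mul hce
  obtain ⟨s, hs⟩ := exists_eq_mul_mul_of_rIdeal_eq_rAnn hf hrid
  exact ⟨c * e, b * g, Set.mul_mem_center hc he, Set.mul_mem_center hb hg,
    lAnn_eq_lIdeal_of_rIdeal_eq_rAnn hf hrid,
    lIdeal_eq_lAnn_of_rAnn_eq_rIdeal hs (isIdempotentElem_mul_of_eq_mul_mul hbg) hrann⟩
end

section
/- Let M be a right R-module with endomorphism ring S = End_R(M). If M is centrally quasi-morphic and image-projective, then S is right centrally quasi-morphic and M generates its kernels. -/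
/-- `M` is centrally quasi-morphic. -/
def CentrallyQuasiMorphicMod (R M : Type*) [Ring R] [AddCommGroup M] [Module R M] : Prop :=
  ∀ f : Module.End R M, ∃ g h : Module.End R M,
    g ∈ Set.center (Module.End R M) ∧ h ∈ Set.center (Module.End R M) ∧
    LinearMap.ker f = LinearMap.range g ∧ LinearMap.range f = LinearMap.ker h

/-- `M` is centrally morphic. -/
def CentrallyMorphicMod (R M : Type*) [Ring R] [AddCommGroup M] [Module R M] : Prop :=
  ∀ f : Module.End R M, ∃ g : Module.End R M,
    g ∈ Set.center (Module.End R M) ∧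
    LinearMap.ker f = LinearMap.range g ∧ LinearMap.range f = LinearMap.ker g

/-- A ring is right centrally morphic. -/
def RightCentrallyMorphic (S : Type*) [Ring S] : Prop :=
  ∀ a : S, ∃ b : S, b ∈ Set.center S ∧
    rAnn S a = rIdeal S b ∧ rIdeal S a = rAnn S b

/-
In `S = End_R(M)` the right annihilator of `a` consists of the `x` with `im x ⊆ ker a`, and
image-projectivity says that `gS` consists exactly of the `x` with `im x ⊆ im g`. So the central
endomorphisms `g, h` with `ker a = im g` and `im a = ker h` supplied by central quasi-morphicity
give `rann a = gS` and `aS = rann h`. Every kernel being an image of an endomorphism, it is in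
particular a sum of such images.
-/

namespace Module.End

variable {R M : Type*} [Ring R] [AddCommGroup M] [Module R M]

theorem mem_rAnn_iff_range_le_ker {a x : Module.End R M} :
    x ∈ rAnn (Module.End R M) a ↔ LinearMap.range x ≤ LinearMap.ker a := by
  rw [LinearMap.range_le_ker_iff, ← mul_eq_comp]
  rfl

theorem mem_rIdeal_iff_range_le (himp : ImageProjective R M) {g x : Module.End R M} :
    x ∈ rIdeal (Module.End R M) g ↔ LinearMap.range x ≤ LinearMap.range g := by
  refine ⟨?_, himp x g⟩
  rintro ⟨s, rfl⟩
  exact LinearMap.range_comp_le_range s g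

theorem rAnn_eq_rIdeal_of_ker_eq_range (himp : ImageProjective R M) {a g : Module.End R M}
    (hker : LinearMap.ker a = LinearMap.range g) :
    rAnn (Module.End R M) a = rIdeal (Module.End R M) g := by
  ext x
  rw [mem_rAnn_iff_range_le_ker, mem_rIdeal_iff_range_le himp, hker]

theorem rIdeal_eq_rAnn_of_range_eq_ker (himp : ImageProjective R M) {a h : Module.End R M}
    (hrange : LinearMap.range a = LinearMap.ker h) :
    rIdeal (Module.End R M) a = rAnn (Module.End R M) h := by
  ext x
  rw [mem_rIdeal_iff_range_le himp, mem_rAnn_iff_range_le_ker, hrange]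

end Module.End

theorem generatesKernels_of_forall_ker_eq_range (R M : Type*) [Ring R] [AddCommGroup M]
    [Module R M] (hker : ∀ f : Module.End R M, ∃ g : Module.End R M,
      LinearMap.ker f = LinearMap.range g) :
    GeneratesKernels R M := by
  intro f
  obtain ⟨g, hg⟩ := hker f
  exact le_antisymm (hg.le.trans (le_biSup LinearMap.range hg.ge)) (iSup₂_le fun _ hγ => hγ)

/-- If `M` is centrally quasi-morphic and image-projective, then `End R M` is right
centrally quasi-morphic and `M` generates its kernels. -/
theorem endRing_rightCQM_of_CQM_imageProjective (R M : Type*)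
    [Ring R] [AddCommGroup M] [Module R M]
    (hcqm : CentrallyQuasiMorphicMod R M) (himp : ImageProjective R M) :
    RightCentrallyQuasiMorphic (Module.End R M) ∧ GeneratesKernels R M := by
  refine ⟨fun a => ?_, generatesKernels_of_forall_ker_eq_range R M fun f => ?_⟩
  · obtain ⟨g, h, hg, hh, hker, hrange⟩ := hcqm a
    exact ⟨g, h, hg, hh, Module.End.rAnn_eq_rIdeal_of_ker_eq_range himp hker,
      Module.End.rIdeal_eq_rAnn_of_range_eq_ker himp hrange⟩
  · obtain ⟨g, -, -, -, hker, -⟩ := hcqm f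
    exact ⟨g, hker⟩
end

section
/- Let M be a right R-module with endomorphism ring S = End_R(M). Suppose M is image-projective and generates its kernels. If S is right centrally quasi-morphic, then M is centrally quasi-morphic. -/
namespace Module.End

variable {R M : Type*} [Ring R] [AddCommGroup M] [Module R M]

theorem range_le_ker_of_rIdeal_subset_rAnn {u b : Module.End R M}
    (h : rIdeal _ b ⊆ rAnn _ u) : LinearMap.range b ≤ LinearMap.ker u :=
  LinearMap.range_le_ker_iff.mpr (h ⟨1, (mul_one b).symm⟩)

/-- Each `γ` with `range γ ≤ ker u` lies in `rAnn u ⊆ bS`, so `range γ ≤ range b`. -/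
theorem ker_le_range_of_rAnn_subset_rIdeal (hgen : GeneratesKernels R M)
    {u b : Module.End R M} (h : rAnn _ u ⊆ rIdeal _ b) :
    LinearMap.ker u ≤ LinearMap.range b := by
  rw [hgen u]
  refine iSup₂_le fun γ hγ => ?_
  obtain ⟨s, rfl⟩ := h (LinearMap.range_le_ker_iff.mp hγ)
  exact LinearMap.range_comp_le_range s b

theorem ker_eq_range_of_rAnn_eq_rIdeal (hgen : GeneratesKernels R M)
    {u b : Module.End R M} (h : rAnn _ u = rIdeal _ b) :
    LinearMap.ker u = LinearMap.range b :=
  le_antisymm (ker_le_range_of_rAnn_subset_rIdeal hgen h.le)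
    (range_le_ker_of_rIdeal_subset_rAnn h.ge)

end Module.End

theorem CQM_of_endRing_rightCQM_general (R M : Type*)
    [Ring R] [AddCommGroup M] [Module R M]
    (hgen : GeneratesKernels R M)
    (hS : RightCentrallyQuasiMorphic (Module.End R M)) :
    CentrallyQuasiMorphicMod R M := by
  intro f
  obtain ⟨b, c, hb, hc, hker, hrange⟩ := hS f
  exact ⟨b, c, hb, hc, Module.End.ker_eq_range_of_rAnn_eq_rIdeal hgen hker,
    (Module.End.ker_eq_range_of_rAnn_eq_rIdeal hgen hrange.symm).symm⟩

/-- If `M` is image-projective and generates its kernels, and `End R M` is right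
centrally quasi-morphic, then `M` is centrally quasi-morphic. -/
theorem CQM_of_endRing_rightCQM (R M : Type*)
    [Ring R] [AddCommGroup M] [Module R M]
    (himp : ImageProjective R M) (hgen : GeneratesKernels R M)
    (hS : RightCentrallyQuasiMorphic (Module.End R M)) :
    CentrallyQuasiMorphicMod R M :=
  CQM_of_endRing_rightCQM_general R M hgen hS
end

section
/- Let M be a right R-module with endomorphism ring S = End_R(M). Suppose M is image-projective and generates its kernels. Then the following are equivalent: (a) M is centrally morphic; (b) M is centrally quasi-morphic; (c) S is right centrally morphic. -/
/-! Image-projectivity turns `ker f = im g` into `rann f = gS`, and generating kernels turns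
`rann f = gS` back into `ker f = im g`. So the module conditions become annihilator conditions in
`End R M`, where a quasi-morphic element with central witnesses `b, c` is already morphic with
witness `b`: `c` kills `a`, hence `c ∈ rann a = bS`, so `rann b ⊆ rann c = aS`. -/

open LinearMap

theorem rIdeal_eq_rAnn_of_rAnn_eq_rIdeal {S : Type*} [Ring S] {a b c : S}
    (hb : b ∈ Set.center S) (hc : c ∈ Set.center S)
    (hab : rAnn S a = rIdeal S b) (hac : rIdeal S a = rAnn S c) : rIdeal S a = rAnn S b := by
  have hab_zero : a * b = 0 := show b ∈ rAnn S a from hab ▸ ⟨1, (mul_one b).symm⟩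
  have hca_zero : c * a = 0 := show a ∈ rAnn S c from hac ▸ ⟨1, (mul_one a).symm⟩
  obtain ⟨s, rfl⟩ : c ∈ rIdeal S b := hab ▸ show a * c = 0 by rw [← hc.comm a]; exact hca_zero
  ext x
  constructor
  · rintro ⟨t, rfl⟩
    show b * (a * t) = 0
    rw [← mul_assoc, hb.comm a, hab_zero, zero_mul]
  · intro hbx
    rw [hac]
    show b * s * x = 0
    rw [hb.comm s, mul_assoc, show b * x = 0 from hbx, mul_zero]

theorem RightCentrallyQuasiMorphic.rightCentrallyMorphic {S : Type*} [Ring S]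
    (h : RightCentrallyQuasiMorphic S) : RightCentrallyMorphic S := fun a => by
  obtain ⟨b, c, hb, hc, hab, hac⟩ := h a
  exact ⟨b, hb, hab, rIdeal_eq_rAnn_of_rAnn_eq_rIdeal hb hc hab hac⟩

section

variable {R M : Type*} [Ring R] [AddCommGroup M] [Module R M]

theorem Module.End.mem_rAnn_iff {f x : Module.End R M} : x ∈ rAnn _ f ↔ range x ≤ ker f := by
  rw [rAnn, Set.mem_ofPred_eq, Module.End.mul_eq_comp, range_le_ker_iff]

theorem Module.End.range_le_of_mem_rIdeal {g x : Module.End R M} (hx : x ∈ rIdeal _ g) :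
    range x ≤ range g := by
  obtain ⟨s, rfl⟩ := hx
  exact range_comp_le_range s g

theorem CentrallyMorphicMod.centrallyQuasiMorphicMod (h : CentrallyMorphicMod R M) :
    CentrallyQuasiMorphicMod R M := fun f => by
  obtain ⟨g, hg, hker, hrange⟩ := h f
  exact ⟨g, g, hg, hg, hker, hrange⟩

theorem ImageProjective.mem_rIdeal_iff (himp : ImageProjective R M) {g x : Module.End R M} :
    x ∈ rIdeal _ g ↔ range x ≤ range g :=
  ⟨Module.End.range_le_of_mem_rIdeal, himp x g⟩

theorem ImageProjective.rAnn_eq_rIdeal (himp : ImageProjective R M) {f g : Module.End R M}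
    (h : ker f = range g) : rAnn _ f = rIdeal _ g :=
  Set.ext fun _ => by rw [Module.End.mem_rAnn_iff, h, himp.mem_rIdeal_iff]

theorem ImageProjective.rightCentrallyQuasiMorphic (himp : ImageProjective R M)
    (h : CentrallyQuasiMorphicMod R M) : RightCentrallyQuasiMorphic (Module.End R M) :=
  fun a => by
  obtain ⟨g, c, hg, hc, hker, hrange⟩ := h a
  exact ⟨g, c, hg, hc, himp.rAnn_eq_rIdeal hker, (himp.rAnn_eq_rIdeal hrange.symm).symm⟩

theorem GeneratesKernels.ker_eq_range (hgen : GeneratesKernels R M) {f g : Module.End R M}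
    (h : rAnn _ f = rIdeal _ g) : ker f = range g := by
  refine le_antisymm ?_ (Module.End.mem_rAnn_iff.1 (h ▸ ⟨1, (mul_one g).symm⟩))
  rw [hgen f]
  exact iSup₂_le fun γ hγ =>
    Module.End.range_le_of_mem_rIdeal (h ▸ Module.End.mem_rAnn_iff.2 hγ)

theorem GeneratesKernels.centrallyMorphicMod (hgen : GeneratesKernels R M)
    (h : RightCentrallyMorphic (Module.End R M)) : CentrallyMorphicMod R M := fun f => by
  obtain ⟨b, hb, hann, hideal⟩ := h f
  exact ⟨b, hb, hgen.ker_eq_range hann, (hgen.ker_eq_range hideal.symm).symm⟩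

end

/-- If `M` is image-projective and generates its kernels, then `M` is centrally morphic
iff `M` is centrally quasi-morphic iff `End R M` is right centrally morphic. -/
theorem CM_iff_CQM_iff_endRing_rightCM (R M : Type*)
    [Ring R] [AddCommGroup M] [Module R M]
    (himp : ImageProjective R M) (hgen : GeneratesKernels R M) :
    (CentrallyMorphicMod R M ↔ CentrallyQuasiMorphicMod R M) ∧
    (CentrallyQuasiMorphicMod R M ↔ RightCentrallyMorphic (Module.End R M)) := by
  have cqm_to_rcm (h : CentrallyQuasiMorphicMod R M) : RightCentrallyMorphic (Module.End R M) :=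
    (himp.rightCentrallyQuasiMorphic h).rightCentrallyMorphic
  exact ⟨⟨CentrallyMorphicMod.centrallyQuasiMorphicMod,
      fun h => hgen.centrallyMorphicMod (cqm_to_rcm h)⟩,
    ⟨cqm_to_rcm, fun h => (hgen.centrallyMorphicMod h).centrallyQuasiMorphicMod⟩⟩
end

section
/- Let M be a semisimple artinian right R-module (i.e., M is semisimple and artinian) and set S = End_R(M). Then the following are equivalent: (1) M is centrally quasi-morphic; (2) M is centrally morphic; (3) S is right centrally morphic. -/
/-!
Over a semisimple module every submodule is a direct summand, hence the range of an
endomorphism. Consequently `x ∈ gS` iff `range x ≤ range g` and `x ∈ rann a` iff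
`range x ≤ ker a`, so `rann a = bS` and `aS = rann b` say exactly `ker a = range b` and
`range a = ker b`: central morphicity of `M` and of `End R M` coincide.

For a central `c`, `ker c` and `range c` are complementary: a projection onto `range c`
factors as `c * s = s * c` and so kills `ker c ∩ range c`, while a projection onto a
complement of `ker c ⊔ range c` commutes with `c`, hence lands in `ker c` and vanishes.
If `ker f = range g` and `range f = ker h` with `g`, `h` central, then `f` maps `ker g`
isomorphically onto `ker h`. Kernels of central endomorphisms are fully invariant, and in a
semisimple module a fully invariant submodule `N` contains every submodule that embeds into
`N` (extend the embedding to an endomorphism). Hence `ker g = ker h`, and `g` alone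
witnesses central morphicity.
-/

open LinearMap Submodule

section

variable {R M : Type*} [Ring R] [AddCommGroup M] [Module R M]

theorem Submodule.isFullyInvariant_ker_of_mem_center {c : Module.End R M}
    (hc : c ∈ Set.center (Module.End R M)) : (ker c).IsFullyInvariant := fun s x hx => by
  rw [mem_comap, mem_ker, ← Module.End.mul_apply, ← Semigroup.mem_center_iff.mp hc s,
    Module.End.mul_apply, mem_ker.mp hx, map_zero]

theorem Submodule.map_sup_ker_eq_map {N : Type*} [AddCommGroup N] [Module R N]
    (f : M →ₗ[R] N) (p : Submodule R M) :
    map f (p ⊔ ker f) = map f p := by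
  rw [Submodule.map_sup, sup_eq_left]
  exact (map_le_iff_le_comap.mpr (comap_bot f).ge).trans bot_le

theorem mem_rAnn_iff_range_le_ker_s11 {a x : Module.End R M} :
    x ∈ rAnn (Module.End R M) a ↔ range x ≤ ker a :=
  range_le_ker_iff.symm

variable [IsSemisimpleModule R M]

theorem mem_rIdeal_iff_range_le_range {g x : Module.End R M} :
    x ∈ rIdeal (Module.End R M) g ↔ range x ≤ range g := by
  refine ⟨fun ⟨s, hs⟩ => hs ▸ range_comp_le_range s g, fun hx => ?_⟩
  obtain ⟨s, hs⟩ := IsSemisimpleModule.lifting_property g.rangeRestrict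
    g.surjective_rangeRestrict (x.codRestrict _ fun m => hx (mem_range_self x m))
  exact ⟨s, LinearMap.ext fun m => congr(($hs m : M)).symm⟩

theorem Submodule.eq_of_forall_range_le_iff {N₁ N₂ : Submodule R M}
    (h : ∀ x : Module.End R M, range x ≤ N₁ ↔ range x ≤ N₂) : N₁ = N₂ := by
  obtain ⟨P₁, hP₁⟩ := ComplementedLattice.exists_isCompl N₁
  obtain ⟨P₂, hP₂⟩ := ComplementedLattice.exists_isCompl N₂
  refine le_antisymm ?_ ?_
  · simpa only [range_projection] using (h (N₁.projection P₁ hP₁)).mp (range_projection hP₁).le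
  · simpa only [range_projection] using (h (N₂.projection P₂ hP₂)).mpr (range_projection hP₂).le

theorem rAnn_eq_rIdeal_iff {a b : Module.End R M} :
    rAnn (Module.End R M) a = rIdeal (Module.End R M) b ↔ ker a = range b := by
  simp only [Set.ext_iff, mem_rAnn_iff_range_le_ker_s11, mem_rIdeal_iff_range_le_range]
  exact ⟨Submodule.eq_of_forall_range_le_iff, fun h x => by rw [h]⟩

theorem rIdeal_eq_rAnn_iff {a b : Module.End R M} :
    rIdeal (Module.End R M) a = rAnn (Module.End R M) b ↔ range a = ker b := by
  simp only [Set.ext_iff, mem_rAnn_iff_range_le_ker_s11, mem_rIdeal_iff_range_le_range]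
  exact ⟨Submodule.eq_of_forall_range_le_iff, fun h x => by rw [h]⟩

theorem Submodule.IsFullyInvariant.range_le_of_injective {N : Submodule R M}
    (hN : N.IsFullyInvariant) {P : Type*} [AddCommGroup P] [Module R P] {φ : P →ₗ[R] M}
    (hφ : Function.Injective φ) (hφN : range φ ≤ N) (ψ : P →ₗ[R] M) : range ψ ≤ N := by
  obtain ⟨u, rfl⟩ := IsSemisimpleModule.extension_property φ hφ ψ
  rw [range_comp, map_le_iff_le_comap]
  exact hφN.trans (hN u)

theorem disjoint_ker_range_of_mem_center {c : Module.End R M}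
    (hc : c ∈ Set.center (Module.End R M)) : Disjoint (ker c) (range c) := by
  obtain ⟨q, hq⟩ := ComplementedLattice.exists_isCompl (range c)
  obtain ⟨s, hs⟩ := mem_rIdeal_iff_range_le_range.mpr (range_projection hq).le
  refine disjoint_def.mpr fun x hxk hxr => ?_
  calc x = (range c).projection q hq x := (projection_apply_of_mem_left hq hxr).symm
    _ = s (c x) := by rw [hs, ← Semigroup.mem_center_iff.mp hc s]; rfl
    _ = 0 := by rw [mem_ker.mp hxk, map_zero]

theorem codisjoint_ker_range_of_mem_center {c : Module.End R M}
    (hc : c ∈ Set.center (Module.End R M)) : Codisjoint (ker c) (range c) := by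
  obtain ⟨P, hP⟩ := ComplementedLattice.exists_isCompl (ker c ⊔ range c)
  set π := P.projection _ hP.symm
  have hπ : ∀ m, π m ∈ ker c := fun m => by
    have hcomm : c (π m) = π (c m) :=
      (LinearMap.congr_fun (Semigroup.mem_center_iff.mp hc π) m).symm
    rw [mem_ker, hcomm, projection_apply_eq_zero_iff]
    exact mem_sup_right (mem_range_self c m)
  have hP0 : P = ⊥ := by
    rw [← range_projection hP.symm, eq_bot_iff]
    rintro _ ⟨m, rfl⟩
    exact hP.disjoint.le_bot ⟨mem_sup_left (hπ m), projection_apply_mem _ m⟩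
  simpa [codisjoint_iff, hP0] using hP.codisjoint

theorem isCompl_ker_range_of_mem_center {c : Module.End R M}
    (hc : c ∈ Set.center (Module.End R M)) : IsCompl (ker c) (range c) :=
  ⟨disjoint_ker_range_of_mem_center hc, codisjoint_ker_range_of_mem_center hc⟩

theorem ker_eq_ker_of_ker_eq_range_of_range_eq_ker {f g h : Module.End R M}
    (hg : g ∈ Set.center (Module.End R M)) (hh : h ∈ Set.center (Module.End R M))
    (hfg : ker f = range g) (hfh : range f = ker h) : ker g = ker h := by
  have hcompl : IsCompl (ker g) (ker f) := hfg ▸ isCompl_ker_range_of_mem_center hg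
  have hrange : range (f ∘ₗ (ker g).subtype) = range f := by
    rw [range_comp, range_subtype, ← map_sup_ker_eq_map, hcompl.sup_eq_top, range_eq_map]
  have hinj : Function.Injective (f ∘ₗ (ker g).subtype) := by
    rw [← ker_eq_bot, ker_comp, ← disjoint_iff_comap_eq_bot]
    exact hcompl.disjoint
  refine le_antisymm ?_ ?_
  · simpa only [range_subtype] using (isFullyInvariant_ker_of_mem_center hh).range_le_of_injective
      hinj (hrange.trans hfh).le (ker g).subtype
  · simpa only [← hfh, ← hrange] using (isFullyInvariant_ker_of_mem_center hg).range_le_of_injective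
      (ker g).injective_subtype (range_subtype _).le (f ∘ₗ (ker g).subtype)

theorem centrallyQuasiMorphicMod_iff_centrallyMorphicMod :
    CentrallyQuasiMorphicMod R M ↔ CentrallyMorphicMod R M := by
  refine ⟨fun hcqm f => ?_, fun hcm f => ?_⟩
  · obtain ⟨g, h, hg, hh, hfg, hfh⟩ := hcqm f
    exact ⟨g, hg, hfg, hfh.trans (ker_eq_ker_of_ker_eq_range_of_range_eq_ker hg hh hfg hfh).symm⟩
  · obtain ⟨g, hg, hfg, hfh⟩ := hcm f
    exact ⟨g, g, hg, hg, hfg, hfh⟩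

theorem centrallyMorphicMod_iff_rightCentrallyMorphic :
    CentrallyMorphicMod R M ↔ RightCentrallyMorphic (Module.End R M) := by
  simp only [CentrallyMorphicMod, RightCentrallyMorphic, rAnn_eq_rIdeal_iff, rIdeal_eq_rAnn_iff]

end

theorem semisimple_artinian_CQM_iff_CM_iff_endRing_rightCM_general (R M : Type*)
    [Ring R] [AddCommGroup M] [Module R M] [IsSemisimpleModule R M] :
    (CentrallyQuasiMorphicMod R M ↔ CentrallyMorphicMod R M) ∧
    (CentrallyMorphicMod R M ↔ RightCentrallyMorphic (Module.End R M)) :=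
  ⟨centrallyQuasiMorphicMod_iff_centrallyMorphicMod, centrallyMorphicMod_iff_rightCentrallyMorphic⟩

/-- For a semisimple artinian module `M`, `M` is centrally quasi-morphic iff `M` is
centrally morphic iff `End R M` is right centrally morphic. -/
theorem semisimple_artinian_CQM_iff_CM_iff_endRing_rightCM (R M : Type*)
    [Ring R] [AddCommGroup M] [Module R M] [IsSemisimpleModule R M] [IsArtinian R M] :
    (CentrallyQuasiMorphicMod R M ↔ CentrallyMorphicMod R M) ∧
    (CentrallyMorphicMod R M ↔ RightCentrallyMorphic (Module.End R M)) :=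
  semisimple_artinian_CQM_iff_CM_iff_endRing_rightCM_general R M
end

section
/- Let R be a semiprime, right centrally quasi-morphic ring whose center Z(R) is von Neumann regular. Then R is strongly π-regular: for every a ∈ R there exist n ≥ 1 and r, u ∈ R with a^n = a^{n+1}·r and a^n = u·a^{n+1}. -/
/-- A ring is strongly π-regular. -/
def StronglyPiRegular (S : Type*) [Ring S] : Prop :=
  ∀ a : S, ∃ n : ℕ, 1 ≤ n ∧ ∃ r u : S, a ^ n = a ^ (n + 1) * r ∧ a ^ n = u * a ^ (n + 1)

/-- A ring is semiprime: every two-sided ideal squaring to zero is zero. -/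
def SemiprimeRing (S : Type*) [Ring S] : Prop :=
  ∀ I : TwoSidedIdeal S, (∀ x ∈ I, ∀ y ∈ I, x * y = 0) → ∀ x ∈ I, x = 0

/-!
A semiprime right centrally quasi-morphic ring is reduced: if `a² = 0` then `a ∈ rann(a) = bR`
with `b` central and `ab = 0`, so `aRa ⊆ aRbR = abRR = 0`. It is also von Neumann regular:
writing `aR = rann(c)` with `c` central and `c = cdc` with `d` central, `1 - cd ∈ rann(c) = aR`,
say `1 - cd = as`, and `ca = 0` gives `a = (1 - cd)a = asa`. In a reduced ring idempotents are
central, so the idempotents `as` and `sa` commute with `a`, whence `a = a²s = sa²`.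
-/

open TwoSidedIdeal in
theorem SemiprimeRing.eq_zero_of_forall_mul_mul_eq_zero {R : Type*} [Ring R]
    (hsp : SemiprimeRing R) {a : R} (h : ∀ r, a * r * a = 0) : a = 0 := by
  have hleft : ∀ y ∈ span {a}, ∀ r, a * r * y = 0 := by
    intro y hy
    induction hy using span_induction with
    | mem y hy => rw [Set.mem_singleton_iff.mp hy]; exact h
    | zero => simp
    | add y z _ _ hy hz => intro r; rw [mul_add, hy, hz, add_zero]
    | neg y _ hy => intro r; rw [mul_neg, hy, neg_zero]
    | left_absorb t y _ hy => intro r; rw [← mul_assoc, mul_assoc a, hy]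
    | right_absorb t y _ hy => intro r; rw [← mul_assoc, hy, zero_mul]
  have hsq : ∀ x ∈ span {a}, ∀ y ∈ span {a}, x * y = 0 := by
    intro x hx
    induction hx using span_induction with
    | mem x hx => intro y hy; rw [Set.mem_singleton_iff.mp hx, ← mul_one a]; exact hleft y hy 1
    | zero => simp
    | add x z _ _ hx hz => intro y hy; rw [add_mul, hx y hy, hz y hy, add_zero]
    | neg x _ hx => intro y hy; rw [neg_mul, hx y hy, neg_zero]
    | left_absorb t x _ hx => intro y hy; rw [mul_assoc, hx y hy, mul_zero]
    | right_absorb t x _ hx => intro y hy; rw [mul_assoc, hx _ (mul_mem_left _ t y hy)]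
  exact hsp (span {a}) hsq a (subset_span rfl)

theorem isReduced_of_semiprimeRing_of_rightCentrallyQuasiMorphic {R : Type*} [Ring R]
    (hsp : SemiprimeRing R) (hcqm : RightCentrallyQuasiMorphic R) : IsReduced R := by
  refine (isReduced_iff_pow_one_lt 2 one_lt_two).mpr fun a ha => ?_
  obtain ⟨b, -, hb, -, hann, -⟩ := hcqm a
  have hab : a * b = 0 := show b ∈ rAnn R a from hann ▸ ⟨1, (mul_one b).symm⟩
  obtain ⟨t, ht⟩ : a ∈ rIdeal R b := hann ▸ (show a * a = 0 by rwa [← sq])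
  refine hsp.eq_zero_of_forall_mul_mul_eq_zero fun r => ?_
  calc a * r * a = a * r * (b * t) := by rw [← ht]
    _ = a * (b * r) * t := by rw [← Semigroup.mem_center_iff.mp hb r]; noncomm_ring
    _ = 0 := by rw [← mul_assoc, hab, zero_mul, zero_mul]

theorem exists_mul_mul_eq_self_of_rightCentrallyQuasiMorphic {R : Type*} [Ring R]
    (hcqm : RightCentrallyQuasiMorphic R) (hZ : CenterVNRegular R) (a : R) :
    ∃ s, a * s * a = a := by
  obtain ⟨-, c, -, hc, -, hann⟩ := hcqm a
  obtain ⟨d, hd, hcd⟩ := hZ c hc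
  have hca : c * a = 0 := show a ∈ rAnn R c from hann ▸ ⟨1, (mul_one a).symm⟩
  have hmem : c * (1 - c * d) = 0 := by
    rw [mul_sub, mul_one, ← mul_assoc, mul_assoc c c, ← Semigroup.mem_center_iff.mp hc d,
      ← mul_assoc, ← hcd, sub_self]
  obtain ⟨s, hs⟩ : 1 - c * d ∈ rIdeal R a := hann ▸ hmem
  refine ⟨s, ?_⟩
  rw [← hs, sub_mul, one_mul, mul_assoc, ← Semigroup.mem_center_iff.mp hd a, ← mul_assoc, hca,
    zero_mul, sub_zero]

theorem IsIdempotentElem.commute_of_isReduced {R : Type*} [Ring R] [IsReduced R] {e : R}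
    (he : IsIdempotentElem e) (x : R) : Commute e x := by
  have hl : (e * x - e * x * e) * e = 0 := by rw [sub_mul, mul_assoc _ e e, he.eq, sub_self]
  have hr : e * (x * e - e * x * e) = 0 := by
    rw [mul_sub, ← mul_assoc, ← mul_assoc, ← mul_assoc, he.eq, sub_self]
  have hexe : e * x * e = e * x := by
    refine (sub_eq_zero.mp <| eq_zero_of_pow_eq_zero (n := 2) ?_).symm
    calc (e * x - e * x * e) ^ 2 = (e * x - e * x * e) * e * (x - x * e) := by noncomm_ring
      _ = 0 := by rw [hl, zero_mul]
  have hxee : e * x * e = x * e := by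
    refine (sub_eq_zero.mp <| eq_zero_of_pow_eq_zero (n := 2) ?_).symm
    calc (x * e - e * x * e) ^ 2 = (x - e * x) * (e * (x * e - e * x * e)) := by noncomm_ring
      _ = 0 := by rw [hr, mul_zero]
  exact hexe.symm.trans hxee

section Reduced

variable {R : Type*} [Ring R] [IsReduced R] {a s : R}

theorem sq_mul_eq_self_of_mul_mul_eq_self (h : a * s * a = a) : a ^ 2 * s = a := by
  have he : IsIdempotentElem (a * s) := by rw [IsIdempotentElem, ← mul_assoc, h]
  rw [sq, mul_assoc, ← (he.commute_of_isReduced a).eq, h]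

theorem mul_sq_eq_self_of_mul_mul_eq_self (h : a * s * a = a) : s * a ^ 2 = a := by
  have he : IsIdempotentElem (s * a) := by rw [IsIdempotentElem, mul_assoc, ← mul_assoc a, h]
  rw [sq, ← mul_assoc, (he.commute_of_isReduced a).eq, ← mul_assoc, h]

end Reduced

/-- A semiprime right centrally quasi-morphic ring with von Neumann regular center
is strongly π-regular. -/
theorem stronglyPiRegular_of_semiprime_rightCQM (R : Type*) [Ring R]
    (hsp : SemiprimeRing R) (hcqm : RightCentrallyQuasiMorphic R)
    (hZ : CenterVNRegular R) :
    StronglyPiRegular R := by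
  have := isReduced_of_semiprimeRing_of_rightCentrallyQuasiMorphic hsp hcqm
  intro a
  obtain ⟨s, hs⟩ := exists_mul_mul_eq_self_of_rightCentrallyQuasiMorphic hcqm hZ a
  refine ⟨1, le_rfl, s, s, ?_, ?_⟩
  · rw [pow_one, sq_mul_eq_self_of_mul_mul_eq_self hs]
  · rw [pow_one, mul_sq_eq_self_of_mul_mul_eq_self hs]
end

section
/- Let k be a field and let T be the ring of 2×2 upper triangular matrices over k. For the matrix a = E₁₂ (the matrix unit with 1 in position (1,2) and 0 elsewhere), there is no element b in the center Z(T) with rann_T(a) = bT. In particular, T is not right centrally quasi-morphic. -/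
/-- The ring of 2×2 upper triangular matrices over `k`, as a subring of the
full matrix ring. -/
def UpperTriangular2 (k : Type*) [Field k] : Subring (Matrix (Fin 2) (Fin 2) k) where
  carrier := {A | A 1 0 = 0}
  zero_mem' := by simp [Set.mem_setOf_eq]
  one_mem' := by simp [Set.mem_setOf_eq, Matrix.one_apply]
  add_mem' := by
    intro a b ha hb
    simp only [Set.mem_setOf_eq, Matrix.add_apply] at *
    simp [ha, hb]
  neg_mem' := by
    intro a ha
    simp only [Set.mem_setOf_eq, Matrix.neg_apply] at *
    simp [ha]
  mul_mem' := by
    intro a b ha hb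
    simp only [Set.mem_setOf_eq, Matrix.mul_apply, Fin.sum_univ_two] at *
    simp [ha, hb]

/-- The matrix unit `E₁₂` as an element of the upper triangular matrix ring. -/
def E12 (k : Type*) [Field k] : UpperTriangular2 k :=
  ⟨Matrix.of ![![0, 1], ![0, 0]], rfl⟩

/-! If `rAnn a = bS` with `b` central, then `ab = 0` and every `x = bs` in `rAnn a` satisfies
`xa = bsa = sab = 0`. In the upper triangular ring, `E₁₁` lies in the right annihilator of `E₁₂`
but not in its left one, so no central `b` works for `a = E₁₂`. -/

theorem rAnn_subset_lAnn_of_eq_rIdeal_of_mem_center {S : Type*} [Ring S] {a b : S}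
    (hb : b ∈ Set.center S) (h : rAnn S a = rIdeal S b) : rAnn S a ⊆ lAnn S a := by
  have hab : a * b = 0 := by
    have hb_mem : b ∈ rIdeal S b := ⟨1, (mul_one b).symm⟩
    rwa [← h] at hb_mem
  intro x hx
  rw [h] at hx
  obtain ⟨s, rfl⟩ := hx
  change b * s * a = 0
  rw [mul_assoc, (Set.mem_center_iff.mp hb).comm, mul_assoc, hab, mul_zero]

section UpperTriangular2

variable (k : Type*) [Field k]

def E11 : UpperTriangular2 k := ⟨Matrix.of ![![1, 0], ![0, 0]], rfl⟩

theorem E12_mul_E11 : E12 k * E11 k = 0 := by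
  ext i j
  fin_cases i <;> fin_cases j <;> simp [E11, E12, Matrix.mul_apply]

theorem E11_mul_E12 : E11 k * E12 k = E12 k := by
  ext i j
  fin_cases i <;> fin_cases j <;> simp [E11, E12, Matrix.mul_apply]

theorem E12_ne_zero : E12 k ≠ 0 := by
  intro h
  simpa [E12] using congrArg (fun A : UpperTriangular2 k => (A : Matrix (Fin 2) (Fin 2) k) 0 1) h

end UpperTriangular2

/-- In the upper triangular 2×2 matrix ring over a field, the right annihilator of
`E₁₂` is not of the form `bT` for a central `b`; in particular the ring is not
right centrally quasi-morphic. -/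
theorem upperTriangular_not_rightCQM (k : Type*) [Field k] :
    (¬ ∃ b : UpperTriangular2 k, b ∈ Set.center (UpperTriangular2 k) ∧
      rAnn (UpperTriangular2 k) (E12 k) = rIdeal (UpperTriangular2 k) b) ∧
    ¬ RightCentrallyQuasiMorphic (UpperTriangular2 k) := by
  have no_central_generator : ¬ ∃ b : UpperTriangular2 k, b ∈ Set.center (UpperTriangular2 k) ∧
      rAnn (UpperTriangular2 k) (E12 k) = rIdeal (UpperTriangular2 k) b := by
    rintro ⟨b, hb, h⟩
    have h_left : E11 k * E12 k = 0 :=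
      rAnn_subset_lAnn_of_eq_rIdeal_of_mem_center hb h (E12_mul_E11 k)
    exact E12_ne_zero k (by rwa [E11_mul_E12] at h_left)
  refine ⟨no_central_generator, fun hCQM => ?_⟩
  obtain ⟨b, -, hb, -, h, -⟩ := hCQM (E12 k)
  exact no_central_generator ⟨b, hb, h⟩
end
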